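/- arXiv:1409.2721 — 6 statements merged into one kernel-verified Lean document; each statement's English description precedes it below -/
import Mathlib

section
/- Let $k$ be a field and let $S = k[X_1, X_2, \ldots]$ be the polynomial ring in countably infinitely many variables over $k$. If $I$ is a finitely generated ideal of $S$, then every minimal prime ideal of $I$ is finitely generated. -/
open MvPolynomial

/-- If `q` is a prime ideal of `A`, then `q · MvPolynomial σ A` (extension along `C`)
is prime. -/
lemma map_C_isPrime {A : Type*} [CommRing A] (σ : Type*) (q : Ideal A) [hq : q.IsPrime] :
    (q.map (C : A →+* MvPolynomial σ A)).IsPrime := by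
  have : RingHom.ker (Ideal.Quotient.mk q) = q := Ideal.mk_ker
  have hker : q.map (C : A →+* MvPolynomial σ A) =
      RingHom.ker (MvPolynomial.map (Ideal.Quotient.mk q) :
        MvPolynomial σ A →+* MvPolynomial σ (A ⧸ q)) := by
    rw [MvPolynomial.ker_map, this]
  rw [hker]
  exact RingHom.ker_isPrime _

/-- Let `k` be a field and `S = k[X₁, X₂, …]` the polynomial ring in
countably infinitely many variables over `k`.  If `I` is a finitely generated ideal of `S`,
then every minimal prime ideal of `I` is finitely generated. -/
theorem minimalPrime_fg_of_fg {k : Type*} [Field k]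
    (I : Ideal (MvPolynomial ℕ k)) (hI : I.FG)
    (p : Ideal (MvPolynomial ℕ k)) (hp : p ∈ I.minimalPrimes) :
    p.FG := by
  classical
  obtain ⟨G, hG⟩ := hI
  -- the finite set of variables occurring in the generators
  set s : Finset ℕ := G.sup (fun g => g.vars) with hs
  -- the decomposition ℕ ≃ (sᶜ ⊕ s)
  let e : ({x : ℕ // ¬ x ∈ s} ⊕ {x : ℕ // x ∈ s}) ≃ ℕ :=
    (Equiv.sumComm _ _).trans (Equiv.sumCompl (· ∈ s))
  -- base ring on finitely many variables
  let R₀ := MvPolynomial {x : ℕ // x ∈ s} k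
  let T := MvPolynomial {x : ℕ // ¬ x ∈ s} R₀
  let φ : MvPolynomial ℕ k ≃ₐ[k] T :=
    (renameEquiv k e.symm).trans (sumAlgEquiv k _ _)
  have hnoeth : IsNoetherianRing R₀ := inferInstance
  -- each generator maps to a constant polynomial under φ
  have hgen : ∀ g ∈ G, ∃ g₀ : R₀, φ g = C g₀ := by
    intro g hg
    have hvars : (g.vars : Set ℕ) ⊆ (s : Set ℕ) := by
      exact_mod_cast Finset.coe_subset.2 (Finset.le_sup (f := fun g => g.vars) hg)
    have : g ∈ supported k (s : Set ℕ) := (mem_supported).2 hvars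
    rw [supported_eq_range_rename] at this
    obtain ⟨g₀', hg₀'⟩ := this
    set g₁ : MvPolynomial {x : ℕ // x ∈ s} k :=
      rename (fun x : {x : ℕ // x ∈ (↑s : Set ℕ)} => (⟨x.1, x.2⟩ : {x : ℕ // x ∈ s})) g₀'
      with hg₁def
    have hg₁ : rename (Subtype.val : {x : ℕ // x ∈ s} → ℕ) g₁ = g := by
      rw [hg₁def, rename_rename]
      exact hg₀'
    refine ⟨g₁, ?_⟩
    have hcomp : (⇑e.symm ∘ (Subtype.val : {x : ℕ // x ∈ s} → ℕ)) = Sum.inr := by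
      funext x
      simp [e, Equiv.symm_apply_eq]
    have : φ g = (sumAlgEquiv k {x : ℕ // ¬ x ∈ s} {x : ℕ // x ∈ s})
        (rename Sum.inr g₁) := by
      simp only [φ, ← hg₁, AlgEquiv.trans_apply, renameEquiv_apply]
      congr 1
      rw [rename_rename, hcomp]
    rw [this]
    have := congrArg (fun f => f g₁)
      (sumAlgEquiv_comp_rename_inr k {x : ℕ // ¬ x ∈ s} {x : ℕ // x ∈ s})
    simpa [IsScalarTower.toAlgHom_apply, algebraMap_eq] using this
  -- push everything through φ
  set P : Ideal T := p.map (φ : MvPolynomial ℕ k →+* T) with hP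
  have hmapcomap : ∀ (J : Ideal (MvPolynomial ℕ k)),
      (J.map (φ : MvPolynomial ℕ k →+* T)).comap (φ : MvPolynomial ℕ k →+* T) = J := by
    intro J
    exact Ideal.comap_map_of_bijective _ φ.bijective
  have hpP : p = P.comap (φ : MvPolynomial ℕ k →+* T) := (hmapcomap p).symm
  have hpprime : p.IsPrime := hp.1.1
  have hIp : I ≤ p := hp.1.2
  -- the contraction of P to the base ring
  set q : Ideal R₀ := P.comap (C : R₀ →+* T) with hq
  have hqfg : q.FG := IsNoetherian.noetherian q
  -- the key: P equals the extension of q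
  have hqP : q.map (C : R₀ →+* T) ≤ P := Ideal.map_le_iff_le_comap.2 le_rfl
  have hIQ : I ≤ (q.map (C : R₀ →+* T)).comap (φ : MvPolynomial ℕ k →+* T) := by
    rw [← hG, Ideal.span_le]
    intro g hg
    obtain ⟨g₀, hg₀⟩ := hgen g hg
    have hgp : g ∈ p := hIp (hG ▸ Ideal.subset_span hg)
    have hφg : φ g ∈ P := Ideal.mem_map_of_mem _ hgp
    have hg₀q : g₀ ∈ q := by
      rw [hq, Ideal.mem_comap, ← hg₀]; exact hφg
    show φ g ∈ q.map (C : R₀ →+* T)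
    rw [hg₀]
    exact Ideal.mem_map_of_mem _ hg₀q
  have hqprime : q.IsPrime := by
    have hker : RingHom.ker (φ : MvPolynomial ℕ k →+* T) = ⊥ :=
      RingHom.ker_coe_equiv φ.toRingEquiv
    have hPprime : P.IsPrime :=
      Ideal.map_isPrime_of_surjective φ.surjective (hker ▸ bot_le)
    exact Ideal.IsPrime.comap _
  have hQprime : ((q.map (C : R₀ →+* T)).comap
      (φ : MvPolynomial ℕ k →+* T)).IsPrime := by
    have := map_C_isPrime {x : ℕ // ¬ x ∈ s} q
    exact Ideal.IsPrime.comap _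
  have hQp : (q.map (C : R₀ →+* T)).comap (φ : MvPolynomial ℕ k →+* T) ≤ p := by
    rw [hpP]
    exact Ideal.comap_mono hqP
  have hmin := hp.2 ⟨hQprime, hIQ⟩ hQp
  have hpeq : p = (q.map (C : R₀ →+* T)).comap (φ : MvPolynomial ℕ k →+* T) :=
    le_antisymm hmin hQp
  -- conclude FG
  have heq : (q.map (C : R₀ →+* T)).map
      ((φ.toRingEquiv.symm : T ≃+* MvPolynomial ℕ k) : T →+* MvPolynomial ℕ k) = p := by
    rw [Ideal.map_comap_of_equiv φ.toRingEquiv.symm, RingEquiv.symm_symm, hpeq]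
    ext x
    rw [Ideal.mem_comap, Ideal.mem_comap]
    exact Iff.rfl
  exact heq ▸ ((hqfg.map (C : R₀ →+* T)).map _)
end

section
/- Let $\varphi: R \to S$ be a pure ring homomorphism of commutative rings, $I$ an ideal of $R$, and $\mathfrak{p}$ a minimal prime of $I$ in $R$. Then there exists a minimal prime $\mathfrak{q}$ of $IS$ in $S$ such that $\mathfrak{q} \cap R = \mathfrak{p}$. -/
open TensorProduct

universe u v

/-- A ring homomorphism `φ : R →+* S` is *pure* if for every `R`-module `M`
the induced map `M → S ⊗[R] M`, `m ↦ 1 ⊗ m`, is injective. -/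
def RingHom.IsPure {R : Type u} {S : Type v} [CommRing R] [CommRing S] (φ : R →+* S) : Prop :=
  ∀ (M : Type (max u v)) [AddCommGroup M] [Module R M],
    letI := φ.toAlgebra
    Function.Injective (fun m : M => (1 : S) ⊗ₜ[R] m)

/-- Purity implies `IS ∩ R = I`. -/
theorem mem_of_map_mem_map_of_pure {R : Type u} {S : Type v} [CommRing R] [CommRing S]
    (φ : R →+* S) (hφ : φ.IsPure) (I : Ideal R) {s : R} (hs : φ s ∈ I.map φ) : s ∈ I := by
  letI := φ.toAlgebra
  have halg : algebraMap R S = φ := rfl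
  set M := ULift.{v} (R ⧸ I) with hM
  have hmem : φ s ∈ (I • ⊤ : Submodule R S) := by
    rw [Ideal.smul_top_eq_map, halg]
    exact hs
  have key : ∀ x ∈ (I • ⊤ : Submodule R S),
      x ⊗ₜ[R] (ULift.up (Ideal.Quotient.mk I 1) : M) = 0 := by
    intro x hx
    refine Submodule.smul_induction_on hx (fun r hr t _ => ?_) (fun a b ha hb => ?_)
    · have : r • (ULift.up (Ideal.Quotient.mk I 1) : M) = 0 := by
        have h2 : (Ideal.Quotient.mk I) r = 0 := Ideal.Quotient.eq_zero_iff_mem.mpr hr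
        refine ULift.down_injective ?_
        show r • ((Ideal.Quotient.mk I) 1) = 0
        rw [Algebra.smul_def, Ideal.Quotient.algebraMap_eq, map_one, mul_one, h2]
      rw [smul_tmul, this, tmul_zero]
    · rw [add_tmul, ha, hb, add_zero]
  have h0 : (1 : S) ⊗ₜ[R] (ULift.up (Ideal.Quotient.mk I s) : M) = 0 := by
    have h1 : (ULift.up (Ideal.Quotient.mk I s) : M)
        = s • (ULift.up (Ideal.Quotient.mk I 1) : M) := by
      refine ULift.down_injective ?_
      show (Ideal.Quotient.mk I) s = s • ((Ideal.Quotient.mk I) 1)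
      rw [Algebra.smul_def, Ideal.Quotient.algebraMap_eq, map_one, mul_one]
    rw [h1, tmul_smul, smul_tmul', Algebra.smul_def, mul_one, halg]
    exact key _ hmem
  have := hφ M (by
    show (1 : S) ⊗ₜ[R] (ULift.up (Ideal.Quotient.mk I s) : M) = (1 : S) ⊗ₜ[R] (0 : M)
    rw [tmul_zero, h0])
  have : (Ideal.Quotient.mk I) s = 0 := congrArg ULift.down this
  exact Ideal.Quotient.eq_zero_iff_mem.mp this

/-- Let `φ : R → S` be a pure ring homomorphism, `I` an ideal of `R` and
`𝔭` a minimal prime of `I`.  Then there is a minimal prime `𝔮` of `IS` with `𝔮 ∩ R = 𝔭`. -/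
theorem exists_minimalPrime_comap_eq_of_pure {R : Type u} {S : Type v} [CommRing R] [CommRing S]
    (φ : R →+* S) (hφ : φ.IsPure) (I : Ideal R)
    (p : Ideal R) (hp : p ∈ I.minimalPrimes) :
    ∃ q ∈ (I.map φ).minimalPrimes, q.comap φ = p := by
  obtain ⟨⟨hpprime, hIp⟩, hmin⟩ := hp
  -- the multiplicative set `φ(R \ p)`
  set T : Submonoid S := p.primeCompl.map φ with hT
  have hdisj : Disjoint ((I.map φ : Ideal S) : Set S) (T : Set S) := by
    rw [Set.disjoint_left]
    rintro x hx ⟨r, hr, rfl⟩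
    exact hr (hIp (mem_of_map_mem_map_of_pure φ hφ I hx))
  obtain ⟨q₀, hq₀prime, hleq₀, hq₀disj⟩ := Ideal.exists_le_prime_disjoint _ T hdisj
  -- `q₀ ∩ R = p`
  have hcomap : ∀ q : Ideal S, q.IsPrime → I.map φ ≤ q → q ≤ q₀ → q.comap φ = p := by
    intro q hq hIq hqq₀
    have h1 : I ≤ q.comap φ := fun r hr => hIq (Ideal.mem_map_of_mem φ hr)
    have h2 : q.comap φ ≤ p := by
      intro r hr
      by_contra hrp
      exact Set.disjoint_left.mp hq₀disj (hqq₀ hr) ⟨r, hrp, rfl⟩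
    exact le_antisymm h2 (hmin ⟨Ideal.comap_isPrime φ q, h1⟩ h2)
  obtain ⟨q, hq, hqle⟩ := Ideal.exists_minimalPrimes_le (J := q₀) hleq₀
  exact ⟨q, hq, hcomap q hq.1.1 hq.1.2 hqle⟩
end

section
/- Let $\varphi: R \to S$ be a pure ring homomorphism of commutative rings and $I$ an ideal of $R$. If the set of minimal primes of $IS$ in $S$ is finite, then the set of minimal primes of $I$ in $R$ is finite. -/
open TensorProduct

universe u v

/-- Purity implies every ideal of `R` is contracted from `S`. -/
theorem comap_map_eq_of_pure {R : Type u} {S : Type v} [CommRing R] [CommRing S]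
    (φ : R →+* S) (hφ : φ.IsPure) (I : Ideal R) :
    (I.map φ).comap φ = I := by
  letI := φ.toAlgebra
  have halg : algebraMap R S = φ := rfl
  refine le_antisymm (fun x hx => ?_) Ideal.le_comap_map
  have hx' : φ x ∈ I.map φ := hx
  -- work with M = ULift (R ⧸ I)
  have hinj := hφ (ULift.{v} (R ⧸ I))
  have hz : (1 : S) ⊗ₜ[R] (Ideal.Quotient.mk I x) = (0 : S ⊗[R] (R ⧸ I)) := by
    apply (tensorQuotEquivQuotSMul S I).injective
    rw [LinearEquiv.map_zero, tensorQuotEquivQuotSMul_tmul_mk (M := S) I (1 : S) x,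
      Submodule.Quotient.mk_eq_zero]
    have hsm : x • (1 : S) = φ x := by
      rw [Algebra.smul_def, halg, mul_one]
    rw [hsm, Ideal.smul_top_eq_map, Submodule.restrictScalars_mem, halg]
    exact hx'
  have h0 : (1 : S) ⊗ₜ[R] (ULift.up (Ideal.Quotient.mk I x)) =
      (1 : S) ⊗ₜ[R] (0 : ULift.{v} (R ⧸ I)) := by
    apply (TensorProduct.congr (LinearEquiv.refl R S)
      (ULift.moduleEquiv : ULift.{v} (R ⧸ I) ≃ₗ[R] (R ⧸ I))).injective
    rw [TensorProduct.congr_tmul, TensorProduct.congr_tmul]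
    simp only [LinearEquiv.refl_apply, ULift.moduleEquiv_apply, LinearEquiv.map_zero,
      TensorProduct.tmul_zero]
    exact hz
  have := hinj h0
  have : Ideal.Quotient.mk I x = 0 := congrArg ULift.down this
  rwa [Ideal.Quotient.eq_zero_iff_mem] at this

/-- Let `φ : R → S` be a pure ring homomorphism and `I` an ideal of `R`.
If the set of minimal primes of `IS` in `S` is finite, then the set of minimal primes of
`I` in `R` is finite. -/
theorem minimalPrimes_finite_of_pure {R : Type u} {S : Type v} [CommRing R] [CommRing S]
    (φ : R →+* S) (hφ : φ.IsPure) (I : Ideal R)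
    (h : (I.map φ).minimalPrimes.Finite) :
    I.minimalPrimes.Finite := by
  refine (h.image (Ideal.comap φ)).subset ?_
  intro p hp
  have key : (I.map φ).comap φ = I := comap_map_eq_of_pure φ hφ I
  rw [← key] at hp
  obtain ⟨p', hp', hp'c⟩ := Ideal.exists_minimalPrimes_comap_eq φ p hp
  exact ⟨p', hp', hp'c⟩
end

section
/- Let $k$ be a field, $S = k[X_1, X_2, \ldots]$ the polynomial ring in countably many variables, $R$ a subring with a pure inclusion $R \hookrightarrow S$, and $I$ a finitely generated ideal of $R$. Then the set of minimal primes of $I$ in $R$ is finite. -/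
/-!
Purity makes every ideal of `R` contracted from `S = k[X₁, X₂, …]`, so each minimal prime of
`I` is the contraction of a minimal prime of `IS`. The generators of `IS` involve only finitely
many variables, so `IS` is extended from a Noetherian polynomial ring `A = k[X_t]`; since the
extension of a prime of `A` to `S ≅ A[X_{tᶜ}]` stays prime, the minimal primes of `IS` are
extensions of the finitely many minimal primes of its contraction to `A`.
-/

open TensorProduct

universe u v

theorem RingHom.IsPure.comap_map_eq {R S : Type u} [CommRing R] [CommRing S] {φ : R →+* S}
    (hφ : φ.IsPure) (I : Ideal R) : (I.map φ).comap φ = I := by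
  let := φ.toAlgebra
  refine le_antisymm (fun x hx ↦ ?_) Ideal.le_comap_map
  rw [← Ideal.Quotient.eq_zero_iff_mem]
  apply hφ (R ⧸ I)
  -- Under `S ⧸ IS ≃ S ⊗[R] (R ⧸ I)`, `1 ⊗ x̄` is the image of the class of `φ x`, which is zero.
  calc (1 : S) ⊗ₜ[R] Ideal.Quotient.mk I x
      = Algebra.TensorProduct.quotIdealMapEquivTensorQuot S I
          (Ideal.Quotient.mk (I.map (algebraMap R S)) (algebraMap R S x)) := by
        rw [Algebra.TensorProduct.quotIdealMapEquivTensorQuot_mk, Algebra.algebraMap_eq_smul_one,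
          smul_tmul, Algebra.smul_def, mul_one]
        rfl
    _ = (1 : S) ⊗ₜ[R] (0 : R ⧸ I) := by
        rw [(Ideal.Quotient.eq_zero_iff_mem.2 hx :
          Ideal.Quotient.mk (I.map (algebraMap R S)) (algebraMap R S x) = 0), map_zero, tmul_zero]

theorem Ideal.minimalPrimes_map_subset {R S F : Type*} [CommRing R] [CommRing S]
    [FunLike F R S] [RingHomClass F R S] (f : F)
    (hf : ∀ p : Ideal R, p.IsPrime → (p.map f).IsPrime) (I : Ideal R) :
    (I.map f).minimalPrimes ⊆ Ideal.map f '' I.minimalPrimes := by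
  intro Q hQ
  have := hQ.isPrime
  obtain ⟨q, hq, hqQ⟩ := Ideal.exists_minimalPrimes_le (Ideal.map_le_iff_le_comap.mp hQ.le)
  have hqQ' : q.map f ≤ Q := Ideal.map_le_iff_le_comap.mpr hqQ
  exact ⟨q, hq, le_antisymm hqQ' (hQ.2 ⟨hf q hq.isPrime, Ideal.map_mono hq.le⟩ hqQ')⟩

namespace MvPolynomial

variable {σ A : Type*} [CommRing A]

instance isPrime_map_C {p : Ideal A} [p.IsPrime] :
    (p.map (C : A →+* MvPolynomial σ A)).IsPrime := by
  rw [← Ideal.mk_ker (I := p), ← ker_map]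
  exact RingHom.ker_isPrime _

theorem isPrime_map_rename_subtypeVal (t : Set σ) (p : Ideal (MvPolynomial t A)) [p.IsPrime] :
    (p.map (rename ((↑) : t → σ)).toRingHom).IsPrime := by
  classical
  let E : MvPolynomial σ A ≃ₐ[A] MvPolynomial (tᶜ : Set σ) (MvPolynomial t A) :=
    (renameEquiv A ((Equiv.sumComm _ _).trans (Equiv.Set.sumCompl t))).symm.trans
      (sumAlgEquiv A _ _)
  have hE : (E.symm : MvPolynomial (tᶜ : Set σ) (MvPolynomial t A) →+* _).comp C =
      (rename ((↑) : t → σ)).toRingHom := by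
    ext <;> simp [E]
  rw [← hE, ← Ideal.map_map]
  exact Ideal.map_isPrime_of_equiv _

theorem finite_minimalPrimes_of_fg [IsNoetherianRing A] {I : Ideal (MvPolynomial σ A)}
    (hI : I.FG) : I.minimalPrimes.Finite := by
  classical
  obtain ⟨s, rfl⟩ := hI
  let t : Set σ := ↑(s.biUnion vars)
  let ι : MvPolynomial t A →+* MvPolynomial σ A := (rename (↑)).toRingHom
  have hs : (s : Set (MvPolynomial σ A)) ⊆ Set.range ι := by
    intro f hf
    have hf : f ∈ supported A t := mem_supported.2 (Finset.subset_biUnion_of_mem vars hf)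
    rwa [supported_eq_range_rename] at hf
  have hspan : Ideal.span (s : Set (MvPolynomial σ A)) = (Ideal.span (ι ⁻¹' s)).map ι := by
    rw [Ideal.map_span, Set.image_preimage_eq_of_subset hs]
  rw [hspan]
  exact ((Ideal.finite_minimalPrimes_of_isNoetherianRing _ _).image _).subset
    (Ideal.minimalPrimes_map_subset _ (fun p _ ↦ isPrime_map_rename_subtypeVal t p) _)

end MvPolynomial

/-- Let `k` be a field, `S = k[X₁, X₂, …]`, `R` a subring of `S` whose
inclusion is pure, and `I` a finitely generated ideal of `R`.  Then the set of minimal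
primes of `I` in `R` is finite. -/
theorem minimalPrimes_finite_of_pure_subring_of_fg {k : Type} [Field k]
    (R : Subring (MvPolynomial ℕ k)) (hpure : R.subtype.IsPure)
    (I : Ideal R) (hI : I.FG) :
    I.minimalPrimes.Finite := by
  have hfin := MvPolynomial.finite_minimalPrimes_of_fg (hI.map R.subtype)
  rw [← hpure.comap_map_eq I]
  exact (hfin.image _).subset (Ideal.minimalPrimes_comap_subset _ _)
end

section
/- Let $k$ be a field and $R$ a subring of $S = k[X_1, X_2, \ldots]$ such that for some $n$ the inclusion $R_n := R \cap k[X_1,\ldots,X_n] \hookrightarrow k[X_1,\ldots,X_n]$ is pure. Then $R_n$ is a Noetherian ring. -/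
open TensorProduct

universe u v

set_option synthInstance.maxHeartbeats 1000000
set_option maxHeartbeats 1000000

theorem pure_contraction {A : Type u} {B : Type v} [CommRing A] [CommRing B] (φ : A →+* B)
    (hφ : RingHom.IsPure φ) (I : Ideal A) : (I.map φ).comap φ = I := by
  letI := φ.toAlgebra
  refine le_antisymm ?_ (Ideal.le_comap_map)
  intro a ha
  set M := ULift.{v} (A ⧸ I)
  set x : M := ULift.up (Ideal.Quotient.mk I 1)
  let f : B →ₗ[B] B ⊗[A] M :=
    { toFun := fun b => b ⊗ₜ[A] x
      map_add' := fun b c => TensorProduct.add_tmul b c x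
      map_smul' := fun r b => (TensorProduct.smul_tmul' r b x).symm }
  have hker : I.map φ ≤ LinearMap.ker f := by
    rw [Ideal.map_le_iff_le_comap]
    intro i hi
    have : f (φ i) = 0 := by
      show φ i ⊗ₜ[A] x = 0
      have h1 : φ i ⊗ₜ[A] x = (1 : B) ⊗ₜ[A] (i • x) := by
        rw [← TensorProduct.smul_tmul]
        congr 1
        rw [Algebra.smul_def, mul_one]; rfl
      rw [h1]
      have hix : i • x = 0 := by
        have : i • x = ULift.up ((Ideal.Quotient.mk I) (i * 1)) := rfl
        rw [this, mul_one]
        have : (Ideal.Quotient.mk I) i = 0 := by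
          rw [Ideal.Quotient.eq_zero_iff_mem]; exact hi
        rw [this]; rfl
      rw [hix, TensorProduct.tmul_zero]
    exact this
  have hfa : f (φ a) = 0 := hker ha
  have heq : (1 : B) ⊗ₜ[A] (a • x) = (1 : B) ⊗ₜ[A] (0 : M) := by
    rw [TensorProduct.tmul_zero, ← hfa]
    show (1:B) ⊗ₜ[A] (a • x) = φ a ⊗ₜ[A] x
    rw [← TensorProduct.smul_tmul, Algebra.smul_def, mul_one]; rfl
  have h0 := hφ M heq
  have hax : a • x = ULift.up ((Ideal.Quotient.mk I) a) := by
    have h1 : a • (Ideal.Quotient.mk I (1:A)) = Ideal.Quotient.mk I a := by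
      simp [Algebra.smul_def, Ideal.Quotient.algebraMap_eq]
    exact congrArg ULift.up h1
  rw [hax] at h0
  have : (Ideal.Quotient.mk I) a = 0 := congrArg ULift.down h0
  rwa [Ideal.Quotient.eq_zero_iff_mem] at this

theorem pure_noetherian {A : Type u} {B : Type v} [CommRing A] [CommRing B] (φ : A →+* B)
    (hφ : RingHom.IsPure φ) (hB : IsNoetherianRing B) : IsNoetherianRing A := by
  rw [isNoetherianRing_iff, isNoetherian_iff] at *
  haveI : WellFoundedGT (Ideal B) := ⟨hB⟩
  have hsm : StrictMono (fun I : Ideal A => I.map φ) := by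
    have hinj : Function.Injective (fun I : Ideal A => I.map φ) := by
      intro I J h
      rw [← pure_contraction φ hφ I, ← pure_contraction φ hφ J]
      simp only at h; rw [h]
    exact Monotone.strictMono_of_injective (fun _ _ h => Ideal.map_mono h) hinj
  exact hsm.wellFoundedGT.wf


set_option maxHeartbeats 1000000

/-- Let `k` be a field and `R` a subring of `S = k[X₁, X₂, …]` such that
for some `n` the inclusion `Rₙ := R ∩ k[X₁,…,Xₙ] ↪ k[X₁,…,Xₙ]` is pure.  Then `Rₙ` is
a Noetherian ring. -/
theorem isNoetherianRing_of_pure_inclusion {k : Type} [Field k]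
    (R : Subring (MvPolynomial ℕ k)) (n : ℕ)
    (hpure : (Subring.inclusion
      (inf_le_right : R ⊓ (MvPolynomial.supported k {i : ℕ | i < n}).toSubring ≤
        (MvPolynomial.supported k {i : ℕ | i < n}).toSubring)).IsPure) :
    IsNoetherianRing ↥(R ⊓ (MvPolynomial.supported k {i : ℕ | i < n}).toSubring) := by
  haveI : Finite {i : ℕ | i < n} := Set.Finite.to_subtype (Set.finite_Iio n)
  have h1 : IsNoetherianRing (MvPolynomial {i : ℕ | i < n} k) := inferInstance
  have h2 : IsNoetherianRing ↥(MvPolynomial.supported k {i : ℕ | i < n}) :=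
    isNoetherianRing_of_ringEquiv _
      (MvPolynomial.supportedEquivMvPolynomial {i : ℕ | i < n}).symm.toRingEquiv
  have h3 : IsNoetherianRing ↥(MvPolynomial.supported k {i : ℕ | i < n}).toSubring :=
    isNoetherianRing_of_ringEquiv _
      ({ toFun := fun x => ⟨x.1, x.2⟩, invFun := fun x => ⟨x.1, x.2⟩,
         left_inv := fun _ => rfl, right_inv := fun _ => rfl,
         map_mul' := fun _ _ => rfl, map_add' := fun _ _ => rfl } :
        ↥(MvPolynomial.supported k {i : ℕ | i < n}) ≃+*
          ↥(MvPolynomial.supported k {i : ℕ | i < n}).toSubring)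
  exact pure_noetherian _ hpure h3
end

section
/- Let $k$ be a field, $S = k[X_1,\ldots]$, and $R$ a pure $k$-subalgebra of $S$ generated by monomials. Then for every $n$, the inclusion $R \cap k[X_1,\ldots,X_n] \hookrightarrow k[X_1,\ldots,X_n]$ is pure. -/
open TensorProduct

universe u v

set_option synthInstance.maxHeartbeats 1000000
set_option maxHeartbeats 1000000


theorem RingHom.IsPure.of_comp {A B C : Type} [CommRing A] [CommRing B] [CommRing C]
    (f : A →+* B) (g : B →+* C) (h : (g.comp f).IsPure) : f.IsPure := by
  intro M _ _
  letI := f.toAlgebra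
  letI := (g.comp f).toAlgebra
  have hinj := h M
  let gLin : B →ₗ[A] C :=
    { toFun := g
      map_add' := map_add g
      map_smul' := fun a b => by
        simp only [RingHom.id_apply, Algebra.smul_def, RingHom.algebraMap_toAlgebra, map_mul,
          RingHom.comp_apply] }
  intro x y hxy
  apply hinj
  have := congrArg (TensorProduct.map gLin (LinearMap.id : M →ₗ[A] M)) hxy
  simpa [gLin] using this

theorem RingHom.isPure_of_retraction {A B : Type} [CommRing A] [CommRing B]
    (f : A →+* B) (ρ : B →+* A) (h : ρ.comp f = RingHom.id A) : f.IsPure := by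
  intro M _ _
  letI := f.toAlgebra
  let ρLin : B →ₗ[A] A :=
    { toFun := ρ
      map_add' := map_add ρ
      map_smul' := fun a b => by
        simp only [RingHom.id_apply, Algebra.smul_def, RingHom.algebraMap_toAlgebra, map_mul,
          smul_eq_mul]
        congr 1
        exact RingHom.congr_fun h a }
  have hli : Function.LeftInverse
      (fun z : B ⊗[A] M => (TensorProduct.lid A M) (TensorProduct.map ρLin LinearMap.id z))
      (fun m : M => (1 : B) ⊗ₜ[A] m) := by
    intro m
    simp [ρLin, show ρ 1 = 1 from map_one ρ]
  exact hli.injective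

theorem RingHom.IsPure.comp {A B C : Type} [CommRing A] [CommRing B] [CommRing C]
    {f : A →+* B} {g : B →+* C} (hg : g.IsPure) (hf : f.IsPure) : (g.comp f).IsPure := by
  intro M _ _
  letI := f.toAlgebra
  letI := g.toAlgebra
  letI := (g.comp f).toAlgebra
  haveI : IsScalarTower A B C := IsScalarTower.of_algebraMap_eq fun a => rfl
  have h1 := hf M
  have h2 := hg (B ⊗[A] M)
  let e := TensorProduct.AlgebraTensorModule.cancelBaseChange A B C C M
  have e1 : ∀ m : M, e ((1 : C) ⊗ₜ[B] ((1 : B) ⊗ₜ[A] m)) = (1 : C) ⊗ₜ[A] m := by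
    intro m
    simp [e]
  intro x y hxy
  apply h1
  apply h2
  apply e.injective
  rw [e1, e1]
  exact hxy
set_option maxHeartbeats 1000000

noncomputable def killTail (k : Type) [Field k] (n : ℕ) :
    MvPolynomial ℕ k →ₐ[k] MvPolynomial ℕ k :=
  MvPolynomial.aeval (fun i => if i < n then MvPolynomial.X i else 0)

theorem killTail_fixes {k : Type} [Field k] {n : ℕ} {p : MvPolynomial ℕ k}
    (hp : p ∈ MvPolynomial.supported k {i : ℕ | i < n}) : killTail k n p = p := by
  have hp' : p ∈ Algebra.adjoin k (MvPolynomial.X '' {i : ℕ | i < n}) := hp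
  clear hp
  induction hp' using Algebra.adjoin_induction with
  | mem x hx =>
    obtain ⟨i, hi, rfl⟩ := hx
    have hi' : i < n := hi
    simp [killTail, hi']
  | algebraMap r => simp [killTail]
  | add x y _ _ hx hy => rw [map_add, hx, hy]
  | mul x y _ _ hx hy => rw [map_mul, hx, hy]

theorem killTail_mem_supported {k : Type} [Field k] {n : ℕ} (p : MvPolynomial ℕ k) :
    killTail k n p ∈ MvPolynomial.supported k {i : ℕ | i < n} := by
  induction p using MvPolynomial.induction_on with
  | C a =>
    have : killTail k n (MvPolynomial.C a) = MvPolynomial.C a := by simp [killTail]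
    rw [this]
    exact Subalgebra.algebraMap_mem _ a
  | add p q hp hq => rw [map_add]; exact add_mem hp hq
  | mul_X p i hp =>
    rw [map_mul]
    refine mul_mem hp ?_
    by_cases h : i < n
    · have : killTail k n (MvPolynomial.X i) = MvPolynomial.X i := by simp [killTail, h]
      rw [this]
      exact MvPolynomial.X_mem_supported.2 h
    · have : killTail k n (MvPolynomial.X i) = 0 := by simp [killTail, h]
      rw [this]
      exact zero_mem _

theorem killTail_monomial {k : Type} [Field k] {n : ℕ} (t : ℕ →₀ ℕ) :
    killTail k n (MvPolynomial.monomial t 1) = MvPolynomial.monomial t 1 ∨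
      killTail k n (MvPolynomial.monomial t 1) = 0 := by
  by_cases h : ∀ i ∈ t.support, i < n
  · left
    apply killTail_fixes
    rw [MvPolynomial.mem_supported, MvPolynomial.vars_monomial one_ne_zero]
    intro i hi
    exact h i (by exact_mod_cast hi)
  · right
    push_neg at h
    obtain ⟨i, hi, hin⟩ := h
    simp only [killTail]
    rw [MvPolynomial.aeval_monomial, map_one, one_mul]
    apply Finset.prod_eq_zero hi
    simp [if_neg (not_lt.mpr hin), zero_pow (Finsupp.mem_support_iff.mp hi)]

/-- Let `k` be a field, `S = k[X₁, X₂, …]`, and `R` a pure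
`k`-subalgebra of `S` generated by monomials.  Then for every `n` the inclusion
`R ∩ k[X₁,…,Xₙ] ↪ k[X₁,…,Xₙ]` is pure. -/
theorem inclusion_isPure_of_monomial_generated {k : Type} [Field k]
    (R : Subalgebra k (MvPolynomial ℕ k))
    (hpure : (R.val.toRingHom : ↥R →+* MvPolynomial ℕ k).IsPure)
    (hmono : ∃ G : Set (MvPolynomial ℕ k),
      (∀ f ∈ G, ∃ s : ℕ →₀ ℕ, f = MvPolynomial.monomial s 1) ∧ R = Algebra.adjoin k G)
    (n : ℕ) :
    ((Subalgebra.inclusion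
      (inf_le_right : R ⊓ MvPolynomial.supported k {i : ℕ | i < n} ≤
        MvPolynomial.supported k {i : ℕ | i < n})).toRingHom).IsPure := by
  classical
  obtain ⟨G, hGmono, hRG⟩ := hmono
  -- killTail maps R into R
  have hRmap : ∀ p ∈ R, killTail k n p ∈ R := by
    intro p hp
    rw [hRG] at hp ⊢
    induction hp using Algebra.adjoin_induction with
    | mem x hx =>
      obtain ⟨t, rfl⟩ := hGmono x hx
      rcases killTail_monomial (k := k) (n := n) t with h | h
      · rw [h]; exact Algebra.subset_adjoin hx
      · rw [h]; exact zero_mem _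
    | algebraMap r =>
      rw [AlgHom.commutes]
      exact Subalgebra.algebraMap_mem _ r
    | add x y _ _ hx hy => rw [map_add]; exact add_mem hx hy
    | mul x y _ _ hx hy => rw [map_mul]; exact mul_mem hx hy
  let ι1 : ↥(R ⊓ MvPolynomial.supported k {i : ℕ | i < n}) →+* ↥R :=
    (Subalgebra.inclusion (inf_le_left : R ⊓ MvPolynomial.supported k {i : ℕ | i < n} ≤ R)).toRingHom
  let j : ↥(R ⊓ MvPolynomial.supported k {i : ℕ | i < n}) →+*
      ↥(MvPolynomial.supported k {i : ℕ | i < n}) :=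
    (Subalgebra.inclusion
      (inf_le_right : R ⊓ MvPolynomial.supported k {i : ℕ | i < n} ≤
        MvPolynomial.supported k {i : ℕ | i < n})).toRingHom
  let ρ : ↥R →+* ↥(R ⊓ MvPolynomial.supported k {i : ℕ | i < n}) :=
    { toFun := fun r => ⟨killTail k n r.1,
        Algebra.mem_inf.mpr ⟨hRmap r.1 r.2, killTail_mem_supported r.1⟩⟩
      map_one' := Subtype.ext (by simp)
      map_mul' := fun a b => Subtype.ext (by simp)
      map_zero' := Subtype.ext (by simp)
      map_add' := fun a b => Subtype.ext (by simp) }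
  have hsplit : ρ.comp ι1 = RingHom.id _ :=
    RingHom.ext fun a => Subtype.ext (killTail_fixes (Algebra.mem_inf.mp a.2).2)
  have h1 : ((R.val.toRingHom).comp ι1).IsPure :=
    hpure.comp (RingHom.isPure_of_retraction ι1 ρ hsplit)
  have hcomp : ((MvPolynomial.supported k {i : ℕ | i < n}).val.toRingHom).comp j =
      (R.val.toRingHom).comp ι1 := RingHom.ext fun _ => rfl
  rw [← hcomp] at h1
  exact RingHom.IsPure.of_comp j _ h1
end
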